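/- arXiv:2305.15224 — 2 statements merged into one kernel-verified Lean document; each statement's English description precedes it below -/
import Mathlib

section
/- For fixed ρ̄ > 0 and γ ≥ 1, the function ρ ↦ ℓ(ρ̄, ρ) := sqrt(2(ρ̄ - ρ)(h(ρ̄) - h(ρ))/(ρ̄ + ρ)) is strictly increasing on (ρ̄, ∞) and strictly decreasing on (0, ρ̄). -/
open Set

/-- Polytropic enthalpy: `h(ρ) = (ρ^(γ-1) - 1)/(γ-1)` for `γ > 1`, `log ρ` for `γ = 1`. -/
noncomputable def enthalpy (γ ρ : ℝ) : ℝ :=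
  if γ = 1 then Real.log ρ else (ρ ^ (γ - 1) - 1) / (γ - 1)

/-- `ℓ(ρ₁, ρ₂) = sqrt(2(ρ₁-ρ₂)(h(ρ₁)-h(ρ₂))/(ρ₁+ρ₂))`. -/
noncomputable def ell (γ ρ₁ ρ₂ : ℝ) : ℝ :=
  Real.sqrt (2 * (ρ₁ - ρ₂) * (enthalpy γ ρ₁ - enthalpy γ ρ₂) / (ρ₁ + ρ₂))

/-! The radicand factors as `2 · (ρ - ρ̄)/(ρ̄ + ρ) · (h ρ - h ρ̄)`: on `(ρ̄, ∞)` both factors are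
nonnegative and strictly increasing, and on `(0, ρ̄)`, written as
`2 · (ρ̄ - ρ)/(ρ̄ + ρ) · (h ρ̄ - h ρ)`, both are nonnegative and strictly decreasing. This needs only
that `h` is strictly increasing on `(0, ∞)`, which is true for every `γ`. -/

section

variable {α M₀ : Type*} [Preorder α] [MulZeroClass M₀] [PartialOrder M₀] [PosMulStrictMono M₀]
  [MulPosStrictMono M₀] {s : Set α} {f g : α → M₀}

lemma StrictMonoOn.mul (hf : StrictMonoOn f s) (hg : StrictMonoOn g s)
    (hf₀ : ∀ x ∈ s, 0 ≤ f x) (hg₀ : ∀ x ∈ s, 0 ≤ g x) : StrictMonoOn (f * g) s :=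
  fun _ hx _ hy h ↦ mul_lt_mul'' (hf hx hy h) (hg hx hy h) (hf₀ _ hx) (hg₀ _ hx)

lemma StrictAntiOn.mul (hf : StrictAntiOn f s) (hg : StrictAntiOn g s)
    (hf₀ : ∀ x ∈ s, 0 ≤ f x) (hg₀ : ∀ x ∈ s, 0 ≤ g x) : StrictAntiOn (f * g) s :=
  fun _ hx _ hy h ↦ mul_lt_mul'' (hf hx hy h) (hg hx hy h) (hf₀ _ hy) (hg₀ _ hy)

end

lemma strictMonoOn_sub_div_add {a : ℝ} (ha : 0 < a) :
    StrictMonoOn (fun x ↦ (x - a) / (a + x)) (Ioi (-a)) := by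
  intro x hx y hy hxy
  rw [mem_Ioi] at hx hy
  rw [div_lt_div_iff₀ (by linarith) (by linarith)]
  nlinarith

lemma strictAntiOn_sub_div_add {a : ℝ} (ha : 0 < a) :
    StrictAntiOn (fun x ↦ (a - x) / (a + x)) (Ioi (-a)) := by
  simpa only [← neg_div, neg_sub] using (strictMonoOn_sub_div_add ha).neg

lemma enthalpy_strictMonoOn (γ : ℝ) : StrictMonoOn (enthalpy γ) (Ioi 0) := by
  intro x hx y hy hxy
  rw [mem_Ioi] at hx hy
  unfold enthalpy
  split_ifs with hγ
  · exact Real.log_lt_log hx hxy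
  rcases lt_or_gt_of_ne (sub_ne_zero.2 hγ) with hneg | hpos
  · rw [div_lt_div_right_of_neg hneg]
    linarith [Real.rpow_lt_rpow_of_neg hx hxy hneg]
  · gcongr

lemma StrictMonoOn.sqrt_two_mul {α : Type*} [Preorder α] {s : Set α} {g : α → ℝ}
    (hg : StrictMonoOn g s) (hg₀ : ∀ x ∈ s, 0 ≤ g x) : StrictMonoOn (fun x ↦ √(2 * g x)) s :=
  fun x hx _ hy hxy ↦
    Real.sqrt_lt_sqrt (by linarith [hg₀ x hx]) (by linarith [hg hx hy hxy])

lemma StrictAntiOn.sqrt_two_mul {α : Type*} [Preorder α] {s : Set α} {g : α → ℝ}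
    (hg : StrictAntiOn g s) (hg₀ : ∀ x ∈ s, 0 ≤ g x) : StrictAntiOn (fun x ↦ √(2 * g x)) s :=
  fun _ hx y hy hxy ↦
    Real.sqrt_lt_sqrt (by linarith [hg₀ y hy]) (by linarith [hg hx hy hxy])

section

variable {f : ℝ → ℝ} {a : ℝ}

lemma strictMonoOn_sqrt_sub_mul_sub_div_add (hf : StrictMonoOn f (Ioi 0)) (ha : 0 < a) :
    StrictMonoOn (fun x ↦ √(2 * (a - x) * (f a - f x) / (a + x))) (Ioi a) := by
  have hq : StrictMonoOn (fun x ↦ (x - a) / (a + x)) (Ioi a) :=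
    (strictMonoOn_sub_div_add ha).mono fun x hx ↦ (neg_lt_self ha).trans hx
  have hd : StrictMonoOn (fun x ↦ f x - f a) (Ioi a) :=
    fun x hx y hy hxy ↦ sub_lt_sub_right (hf (ha.trans hx) (ha.trans hy) hxy) _
  have hq₀ : ∀ x ∈ Ioi a, 0 ≤ (x - a) / (a + x) :=
    fun x hx ↦ div_nonneg (sub_nonneg.2 hx.le) (by linarith [mem_Ioi.1 hx])
  have hd₀ : ∀ x ∈ Ioi a, 0 ≤ f x - f a :=
    fun x hx ↦ sub_nonneg.2 (hf (mem_Ioi.2 ha) (ha.trans hx) hx).le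
  have hqd₀ : ∀ x ∈ Ioi a, 0 ≤ (x - a) / (a + x) * (f x - f a) :=
    fun x hx ↦ mul_nonneg (hq₀ x hx) (hd₀ x hx)
  convert (hq.mul hd hq₀ hd₀).sqrt_two_mul hqd₀ using 4 with x
  simp only [Pi.mul_apply]
  ring

lemma strictAntiOn_sqrt_sub_mul_sub_div_add (hf : StrictMonoOn f (Ioi 0)) (ha : 0 < a) :
    StrictAntiOn (fun x ↦ √(2 * (a - x) * (f a - f x) / (a + x))) (Ioo 0 a) := by
  have hq : StrictAntiOn (fun x ↦ (a - x) / (a + x)) (Ioo 0 a) :=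
    (strictAntiOn_sub_div_add ha).mono fun x hx ↦ (neg_lt_zero.2 ha).trans hx.1
  have hd : StrictAntiOn (fun x ↦ f a - f x) (Ioo 0 a) :=
    fun x hx y hy hxy ↦ sub_lt_sub_left (hf hx.1 hy.1 hxy) _
  have hq₀ : ∀ x ∈ Ioo 0 a, 0 ≤ (a - x) / (a + x) :=
    fun x hx ↦ div_nonneg (sub_nonneg.2 hx.2.le) (by linarith [hx.1])
  have hd₀ : ∀ x ∈ Ioo 0 a, 0 ≤ f a - f x :=
    fun x hx ↦ sub_nonneg.2 (hf hx.1 (mem_Ioi.2 ha) hx.2).le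
  have hqd₀ : ∀ x ∈ Ioo 0 a, 0 ≤ (a - x) / (a + x) * (f a - f x) :=
    fun x hx ↦ mul_nonneg (hq₀ x hx) (hd₀ x hx)
  convert (hq.mul hd hq₀ hd₀).sqrt_two_mul hqd₀ using 4 with x
  simp only [Pi.mul_apply]
  ring

end

theorem ell_strictMonoOn_Ioi_strictAntiOn_Ioo_general (γ ρb : ℝ) (hρb : 0 < ρb) :
    StrictMonoOn (fun ρ => ell γ ρb ρ) (Set.Ioi ρb) ∧
    StrictAntiOn (fun ρ => ell γ ρb ρ) (Set.Ioo 0 ρb) :=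
  ⟨strictMonoOn_sqrt_sub_mul_sub_div_add (enthalpy_strictMonoOn γ) hρb,
    strictAntiOn_sqrt_sub_mul_sub_div_add (enthalpy_strictMonoOn γ) hρb⟩

/-- For fixed `ρ̄ > 0` and `γ ≥ 1`, the map `ρ ↦ ℓ(ρ̄, ρ)` is strictly increasing on
`(ρ̄, ∞)` and strictly decreasing on `(0, ρ̄)`. -/
theorem ell_strictMonoOn_Ioi_strictAntiOn_Ioo (γ ρb : ℝ) (hγ : 1 ≤ γ) (hρb : 0 < ρb) :
    StrictMonoOn (fun ρ => ell γ ρb ρ) (Set.Ioi ρb) ∧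
    StrictAntiOn (fun ρ => ell γ ρb ρ) (Set.Ioo 0 ρb) :=
  ell_strictMonoOn_Ioi_strictAntiOn_Ioo_general γ ρb hρb
end

section
/- For γ ≥ 1, the function f̃(ρ) := (γ+1)h(ρ) - (γ-1)ρ²h(ρ) + (1 - ρ²) satisfies f̃(1) = 0 and f̃'(ρ) = (γ+1)(1 - ρ²)h'(ρ), hence f̃(ρ) < 0 for all ρ ∈ (0,1). -/
open Set

/-- `f̃(ρ) = (γ+1)h(ρ) - (γ-1)ρ²h(ρ) + 1 - ρ²`. -/
noncomputable def ftilde (γ ρ : ℝ) : ℝ :=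
  (γ + 1) * enthalpy γ ρ - (γ - 1) * ρ ^ 2 * enthalpy γ ρ + (1 - ρ ^ 2)

lemma enthalpy_one (γ : ℝ) : enthalpy γ 1 = 0 := by
  unfold enthalpy
  split <;> simp

lemma enthalpy_key (γ ρ : ℝ) (hρ : 0 < ρ) :
    (γ - 1) * enthalpy γ ρ = ρ ^ (γ - 1) - 1 := by
  unfold enthalpy
  split
  next h => simp [h]
  next h =>
    have : γ - 1 ≠ 0 := sub_ne_zero.mpr h
    field_simp

lemma enthalpy_hasDerivAt (γ ρ : ℝ) (hρ : 0 < ρ) :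
    HasDerivAt (enthalpy γ) (ρ ^ (γ - 2)) ρ := by
  by_cases h : γ = 1
  · have : enthalpy γ = Real.log := by
      funext x; simp [enthalpy, h]
    rw [this, h]
    have := Real.hasDerivAt_log hρ.ne'
    convert this using 1
    rw [show (1 : ℝ) - 2 = -1 by norm_num, Real.rpow_neg_one]
  · have : enthalpy γ = fun x => (x ^ (γ - 1) - 1) / (γ - 1) := by
      funext x; simp [enthalpy, h]
    rw [this]
    have hd := ((Real.hasDerivAt_rpow_const (p := γ - 1) (Or.inl hρ.ne')).sub_const 1).div_const (γ - 1)
    refine hd.congr_deriv ?_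
    have hγ1 : γ - 1 ≠ 0 := sub_ne_zero.mpr h
    field_simp
    ring_nf

lemma rpow_shift1 (γ ρ : ℝ) (hρ : 0 < ρ) : ρ ^ (γ - 2) * ρ = ρ ^ (γ - 1) := by
  have h := (Real.rpow_add hρ (γ - 2) 1).symm
  rw [Real.rpow_one] at h
  rw [h]; ring_nf

lemma ftilde_hasDerivAt (γ ρ : ℝ) (hρ : 0 < ρ) :
    HasDerivAt (ftilde γ) ((γ + 1) * (1 - ρ ^ 2) * ρ ^ (γ - 2)) ρ := by
  have hh := enthalpy_hasDerivAt γ ρ hρ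
  have hpow : HasDerivAt (fun x : ℝ => x ^ 2) (2 * ρ ^ 1) ρ := by
    simpa using hasDerivAt_pow 2 ρ
  have h1 : HasDerivAt (fun x => (γ + 1) * enthalpy γ x - (γ - 1) * x ^ 2 * enthalpy γ x + (1 - x ^ 2))
      ((γ + 1) * ρ ^ (γ - 2) - (((γ - 1) * (2 * ρ ^ 1)) * enthalpy γ ρ + ((γ - 1) * ρ ^ 2) * ρ ^ (γ - 2))
        + (0 - 2 * ρ ^ 1)) ρ :=
    ((hh.const_mul (γ + 1)).sub ((hpow.const_mul (γ - 1)).mul hh)).add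
      ((hasDerivAt_const ρ (1 : ℝ)).sub hpow)
  have hfun : ftilde γ = fun x => (γ + 1) * enthalpy γ x - (γ - 1) * x ^ 2 * enthalpy γ x + (1 - x ^ 2) := rfl
  rw [hfun]
  convert h1 using 1
  have hE := enthalpy_key γ ρ hρ
  have hr1 := rpow_shift1 γ ρ hρ
  have hr2 : ρ ^ (γ - 2) * ρ ^ 2 = ρ ^ (γ - 1) * ρ := by
    rw [← hr1]; ring
  nlinarith [hE, hr1, hr2]

/-- For `γ ≥ 1`: `f̃(1) = 0`, `f̃'(ρ) = (γ+1)(1-ρ²)h'(ρ)` (with `h'(ρ) = ρ^(γ-2)`),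
and `f̃(ρ) < 0` for all `ρ ∈ (0,1)`. -/
theorem ftilde_props (γ : ℝ) (hγ : 1 ≤ γ) :
    ftilde γ 1 = 0 ∧
    (∀ ρ : ℝ, 0 < ρ →
      HasDerivAt (ftilde γ) ((γ + 1) * (1 - ρ ^ 2) * ρ ^ (γ - 2)) ρ) ∧
    (∀ ρ ∈ Set.Ioo (0 : ℝ) 1, ftilde γ ρ < 0) := by
  have h0 : ftilde γ 1 = 0 := by
    unfold ftilde
    rw [enthalpy_one]; ring
  refine ⟨h0, fun ρ hρ => ftilde_hasDerivAt γ ρ hρ, ?_⟩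
  have hmono : StrictMonoOn (ftilde γ) (Ioc (0 : ℝ) 1) := by
    apply strictMonoOn_of_deriv_pos (convex_Ioc 0 1)
    · intro x hx
      exact (ftilde_hasDerivAt γ x hx.1).continuousAt.continuousWithinAt
    · intro x hx
      rw [interior_Ioc] at hx
      rw [(ftilde_hasDerivAt γ x hx.1).deriv]
      have h1 : (0 : ℝ) < γ + 1 := by linarith
      have h2 : (0 : ℝ) < 1 - x ^ 2 := by nlinarith [hx.1, hx.2]
      have h3 : (0 : ℝ) < x ^ (γ - 2) := Real.rpow_pos_of_pos hx.1 _
      positivity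
  intro ρ hρ
  have := hmono ⟨hρ.1, hρ.2.le⟩ ⟨one_pos, le_refl 1⟩ hρ.2
  rwa [h0] at this
end
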